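/- Let (M₁, M₂) and (N₁, N₂) be two-outcome POVMs on ℂ^d and let D ≥ 1. For any density matrix ρ on ℂ^d ⊗ ℂ^D, define for μ ∈ {1,2} the D×D matrix T_μ = Tr_S[((M_μ − N_μ) ⊗ I_D) ρ], with entries (T_μ)_{ab} = Σ_{i,j} (M_μ − N_μ)_{ji} ρ_{(i,a),(j,b)}. Then ‖T₁‖_* + ‖T₂‖_* ≤ 2·max_k |λ_k(M₁ − N₁)|, where λ_k(M₁ − N₁) are the (real) eigenvalues of the Hermitian matrix M₁ − N₁. -/

import Mathlib

/-!
Since `M₂ - N₂ = -(M₁ - N₁)`, both blocks have the same trace norm, so it suffices to show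
`‖Tr_S[(A ⊗ I) ρ]‖_* ≤ c` for the Hermitian matrix `A = M₁ - N₁`, where
`c = max_k |λ_k(A)|`.
Split `A = P - Q` into its positive and negative parts, so that `P, Q ≥ 0` and
`P + Q = |A| ≤ c`.
Partial traces against `ρ ≥ 0` preserve positivity, and the trace norm of a difference of
positive matrices is at most the sum of their traces; here these traces add up to
`Tr[(|A| ⊗ I) ρ] ≤ c Tr ρ = c`.
-/

open Matrix
open scoped ComplexOrder

/-- The trace norm (nuclear norm) of a complex matrix: the trace of `√(Mᴴ M)`,
which equals the sum of the singular values of `M`. -/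
noncomputable def traceNorm {n : Type*} [Fintype n] [DecidableEq n]
    (M : Matrix n n ℂ) : ℝ :=
  (((Matrix.posSemidef_conjTranspose_mul_self M).1.eigenvectorUnitary.1 *
    diagonal (((↑) : ℝ → ℂ) ∘ Real.sqrt ∘ (Matrix.posSemidef_conjTranspose_mul_self M).1.eigenvalues) *
    (star (Matrix.posSemidef_conjTranspose_mul_self M).1.eigenvectorUnitary : Matrix n n ℂ)).trace).re

/-- `partialTraceS X ρ = Tr_S[(X ⊗ I) ρ]`: the `D × D` matrix with entries
`(T)_{ab} = ∑ i j, X_{ji} ρ_{(i,a),(j,b)}`, the partial trace over the system factor. -/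
noncomputable def partialTraceS {d D : ℕ} (X : Matrix (Fin d) (Fin d) ℂ)
    (ρ : Matrix (Fin d × Fin D) (Fin d × Fin D) ℂ) : Matrix (Fin D) (Fin D) ℂ :=
  Matrix.of fun a b => ∑ i, ∑ j, X j i * ρ (i, a) (j, b)

namespace Matrix

variable {n 𝕜 : Type*} [Fintype n] [DecidableEq n] [RCLike 𝕜]

lemma IsHermitian.trace_cfc {A : Matrix n n 𝕜} (hA : A.IsHermitian) (f : ℝ → ℝ) :
    (cfc f A).trace = ∑ i, (f (hA.eigenvalues i) : 𝕜) := by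
  rw [hA.cfc_eq, IsHermitian.cfc, Unitary.conjStarAlgAut_apply, trace_mul_cycle,
    Unitary.coe_star_mul_self, one_mul, trace_diagonal]
  rfl

lemma IsHermitian.posSemidef_cfc {A : Matrix n n 𝕜} (hA : A.IsHermitian) {f : ℝ → ℝ}
    (hf : ∀ i, 0 ≤ f (hA.eigenvalues i)) : (cfc f A).PosSemidef := by
  rw [hA.cfc_eq, IsHermitian.cfc, Unitary.conjStarAlgAut_apply]
  exact PosSemidef.mul_mul_conjTranspose_same
    (posSemidef_diagonal_iff.2 fun i => RCLike.ofReal_nonneg.2 (hf i)) _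

lemma IsHermitian.exists_posSemidef_sub_of_abs_eigenvalues_le {A : Matrix n n 𝕜}
    (hA : A.IsHermitian) {c : ℝ} (hc : ∀ i, |hA.eigenvalues i| ≤ c) :
    ∃ P Q : Matrix n n 𝕜, P.PosSemidef ∧ Q.PosSemidef ∧ A = P - Q ∧
      (c • 1 - (P + Q)).PosSemidef := by
  refine ⟨cfc (fun x => max x 0) A, cfc (fun x => max (-x) 0) A,
    hA.posSemidef_cfc fun _ => le_max_right _ _, hA.posSemidef_cfc fun _ => le_max_right _ _,
    ?_, ?_⟩
  · rw [← cfc_sub ..]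
    simp only [max_zero_sub_max_neg_zero_eq_self]
    exact (cfc_id' ℝ A).symm
  · rw [← cfc_add .., ← Algebra.algebraMap_eq_smul_one, ← cfc_const c A, ← cfc_sub ..]
    refine hA.posSemidef_cfc fun i => ?_
    simpa [max_zero_add_max_neg_zero_eq_abs_self] using hc i

lemma IsHermitian.sum_star_dotProduct_mulVec_eigenvectorBasis {A : Matrix n n 𝕜}
    (hA : A.IsHermitian) (P : Matrix n n 𝕜) :
    ∑ i, star ⇑(hA.eigenvectorBasis i) ⬝ᵥ P *ᵥ ⇑(hA.eigenvectorBasis i) = P.trace := by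
  have := LinearMap.trace_eq_sum_inner (toEuclideanLin P) hA.eigenvectorBasis
  simp only [EuclideanSpace.inner_eq_star_dotProduct, ofLp_toLpLin, toLin'_apply] at this
  simp_rw [dotProduct_comm _ (star _), toLpLin_eq_toLin, Matrix.trace_toLin_eq] at this
  exact this.symm

open scoped MatrixOrder Matrix.Norms.L2Operator in
lemma PosSemidef.trace_mul_nonneg {A B : Matrix n n 𝕜} (hA : A.PosSemidef)
    (hB : B.PosSemidef) : 0 ≤ (A * B).trace := by
  obtain ⟨C, rfl⟩ := CStarAlgebra.nonneg_iff_eq_star_mul_self.mp hA.nonneg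
  rw [star_eq_conjTranspose, mul_assoc, trace_mul_comm]
  exact (hB.mul_mul_conjTranspose_same C).trace_nonneg

end Matrix

section traceNorm

variable {n : Type*} [Fintype n] [DecidableEq n]

lemma traceNorm_eq_re_trace_cfc_sqrt (M : Matrix n n ℂ) :
    traceNorm M = (cfc Real.sqrt (Mᴴ * M)).trace.re := by
  rw [(posSemidef_conjTranspose_mul_self M).1.cfc_eq, IsHermitian.cfc,
    Unitary.conjStarAlgAut_apply, traceNorm]
  rfl

lemma traceNorm_neg (M : Matrix n n ℂ) : traceNorm (-M) = traceNorm M := by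
  rw [traceNorm_eq_re_trace_cfc_sqrt, traceNorm_eq_re_trace_cfc_sqrt, conjTranspose_neg,
    neg_mul_neg]

lemma Matrix.IsHermitian.traceNorm_eq_sum_abs_eigenvalues {T : Matrix n n ℂ}
    (hT : T.IsHermitian) : traceNorm T = ∑ i, |hT.eigenvalues i| := by
  have hsq : Tᴴ * T = cfc (· ^ 2 : ℝ → ℝ) T := by
    rw [hT.eq, cfc_pow_id T 2, sq]
  rw [traceNorm_eq_re_trace_cfc_sqrt, hsq, ← cfc_comp' Real.sqrt (· ^ 2) T, hT.trace_cfc]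
  simp [Real.sqrt_sq_eq_abs]

lemma traceNorm_sub_le_of_posSemidef {P Q : Matrix n n ℂ} (hP : P.PosSemidef)
    (hQ : Q.PosSemidef) : traceNorm (P - Q) ≤ P.trace.re + Q.trace.re := by
  have hT := hP.1.sub hQ.1
  have habs (x : n → ℂ) : |(star x ⬝ᵥ (P - Q) *ᵥ x).re| ≤
      (star x ⬝ᵥ P *ᵥ x).re + (star x ⬝ᵥ Q *ᵥ x).re := by
    have hPx := hP.re_dotProduct_nonneg x
    have hQx := hQ.re_dotProduct_nonneg x
    rw [RCLike.re_to_complex] at hPx hQx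
    rw [sub_mulVec, dotProduct_sub, Complex.sub_re, abs_le]
    constructor <;> linarith
  calc traceNorm (P - Q) = ∑ i, |hT.eigenvalues i| := hT.traceNorm_eq_sum_abs_eigenvalues
    _ ≤ ∑ i, ((star ⇑(hT.eigenvectorBasis i) ⬝ᵥ P *ᵥ ⇑(hT.eigenvectorBasis i)).re +
          (star ⇑(hT.eigenvectorBasis i) ⬝ᵥ Q *ᵥ ⇑(hT.eigenvectorBasis i)).re) :=
      Finset.sum_le_sum fun i _ => by rw [hT.eigenvalues_eq]; exact habs _
    _ = P.trace.re + Q.trace.re := by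
      rw [Finset.sum_add_distrib, ← Complex.re_sum, ← Complex.re_sum,
        hT.sum_star_dotProduct_mulVec_eigenvectorBasis,
        hT.sum_star_dotProduct_mulVec_eigenvectorBasis]

end traceNorm

section partialTraceS

variable {d D : ℕ} (X Y : Matrix (Fin d) (Fin d) ℂ)
  (ρ : Matrix (Fin d × Fin D) (Fin d × Fin D) ℂ)

lemma partialTraceS_add : partialTraceS (X + Y) ρ = partialTraceS X ρ + partialTraceS Y ρ := by
  ext a b
  simp [partialTraceS, add_mul, Finset.sum_add_distrib]

lemma partialTraceS_sub : partialTraceS (X - Y) ρ = partialTraceS X ρ - partialTraceS Y ρ := by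
  ext a b
  simp [partialTraceS, sub_mul, Finset.sum_sub_distrib]

lemma partialTraceS_neg : partialTraceS (-X) ρ = -partialTraceS X ρ := by
  ext a b
  simp [partialTraceS]

lemma partialTraceS_smul {R : Type*} [DistribSMul R ℂ] [IsScalarTower R ℂ ℂ] (c : R) :
    partialTraceS (c • X) ρ = c • partialTraceS X ρ := by
  ext a b
  simp only [partialTraceS, of_apply, Matrix.smul_apply, smul_mul_assoc, Finset.smul_sum]

lemma trace_partialTraceS_one : (partialTraceS 1 ρ).trace = ρ.trace := by
  simp only [trace, partialTraceS, one_apply, ite_mul, one_mul, zero_mul, Finset.sum_ite_eq',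
    Finset.mem_univ, ↓reduceIte, diag_apply, of_apply, Fintype.sum_prod_type]
  exact Finset.sum_comm

variable {X ρ}

lemma Matrix.IsHermitian.partialTraceS (hX : X.IsHermitian) (hρ : ρ.IsHermitian) :
    (partialTraceS X ρ).IsHermitian := by
  ext a b
  simp only [conjTranspose_apply, _root_.partialTraceS, of_apply, star_sum, star_mul']
  rw [Finset.sum_comm]
  exact Finset.sum_congr rfl fun i _ => Finset.sum_congr rfl fun j _ => by
    rw [hX.apply, hρ.apply]

open scoped Kronecker in
lemma star_dotProduct_partialTraceS_mulVec (v : Fin D → ℂ) :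
    star v ⬝ᵥ partialTraceS X ρ *ᵥ v = (ρ * (X ⊗ₖ vecMulVec v (star v))).trace := by
  simp only [dotProduct, mulVec, partialTraceS, of_apply, Pi.star_apply, Matrix.trace, diag_apply,
    mul_apply, kronecker_apply, vecMulVec_apply, Fintype.sum_prod_type, Finset.mul_sum,
    Finset.sum_mul]
  conv_rhs => rw [Finset.sum_comm]
  conv_rhs => enter [2, a, 2, i]; rw [Finset.sum_comm]
  conv_rhs => enter [2, a]; rw [Finset.sum_comm]
  refine Finset.sum_congr rfl fun a _ => Finset.sum_congr rfl fun b _ =>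
    Finset.sum_congr rfl fun i _ => Finset.sum_congr rfl fun j _ => ?_
  ring

lemma Matrix.PosSemidef.partialTraceS (hX : X.PosSemidef) (hρ : ρ.PosSemidef) :
    (partialTraceS X ρ).PosSemidef := by
  refine .of_dotProduct_mulVec_nonneg (hX.1.partialTraceS hρ.1) fun v => ?_
  rw [star_dotProduct_partialTraceS_mulVec]
  exact hρ.trace_mul_nonneg (hX.kronecker (posSemidef_vecMulVec_self_star v))

lemma re_trace_partialTraceS_le {c : ℝ} (hX : (c • 1 - X).PosSemidef) (hρ : ρ.PosSemidef) :
    (partialTraceS X ρ).trace.re ≤ c * ρ.trace.re := by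
  have h := (Complex.le_def.mp (hX.partialTraceS hρ).trace_nonneg).1
  rw [partialTraceS_sub, partialTraceS_smul, trace_sub, trace_smul, trace_partialTraceS_one] at h
  simpa using h

end partialTraceS

theorem traceNorm_partialTrace_add_le_general {d D : ℕ}
    (M₁ M₂ N₁ N₂ : Matrix (Fin d) (Fin d) ℂ)
    (hM₁ : M₁.PosSemidef) (hMsum : M₁ + M₂ = 1)
    (hN₁ : N₁.PosSemidef) (hNsum : N₁ + N₂ = 1)
    (ρ : Matrix (Fin d × Fin D) (Fin d × Fin D) ℂ)
    (hρ : ρ.PosSemidef) (hρtr : ρ.trace = 1) :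
    traceNorm (partialTraceS (M₁ - N₁) ρ) + traceNorm (partialTraceS (M₂ - N₂) ρ) ≤
      2 * ⨆ k, |(hM₁.1.sub hN₁.1).eigenvalues k| := by
  set hA := hM₁.1.sub hN₁.1
  set c := ⨆ k, |hA.eigenvalues k|
  have hMN : M₂ - N₂ = -(M₁ - N₁) := by
    rw [eq_sub_of_add_eq' hMsum, eq_sub_of_add_eq' hNsum]
    abel
  obtain ⟨P, Q, hP, hQ, hPQ, hPQc⟩ := hA.exists_posSemidef_sub_of_abs_eigenvalues_le
    (c := c) fun k => le_ciSup (Finite.bddAbove_range fun k => |hA.eigenvalues k|) k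
  have hT : traceNorm (partialTraceS (M₁ - N₁) ρ) ≤ c := calc
    _ = traceNorm (partialTraceS P ρ - partialTraceS Q ρ) := by rw [hPQ, partialTraceS_sub]
    _ ≤ (partialTraceS P ρ).trace.re + (partialTraceS Q ρ).trace.re :=
      traceNorm_sub_le_of_posSemidef (hP.partialTraceS hρ) (hQ.partialTraceS hρ)
    _ = (partialTraceS (P + Q) ρ).trace.re := by rw [partialTraceS_add, trace_add, Complex.add_re]
    _ ≤ c * ρ.trace.re := re_trace_partialTraceS_le hPQc hρ
    _ = c := by simp [hρtr]
  rw [hMN, partialTraceS_neg, traceNorm_neg]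
  linarith

/-- For two-outcome POVMs `(M₁, M₂)` and `(N₁, N₂)` on `ℂ^d` and any density matrix `ρ` on
`ℂ^d ⊗ ℂ^D`, the blocks `T_μ = Tr_S[((M_μ − N_μ) ⊗ I) ρ]` satisfy
`‖T₁‖_* + ‖T₂‖_* ≤ 2 · max_k |λ_k(M₁ − N₁)|`. -/
theorem traceNorm_partialTrace_add_le {d D : ℕ} (hD : 1 ≤ D)
    (M₁ M₂ N₁ N₂ : Matrix (Fin d) (Fin d) ℂ)
    (hM₁ : M₁.PosSemidef) (hM₂ : M₂.PosSemidef) (hMsum : M₁ + M₂ = 1)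
    (hN₁ : N₁.PosSemidef) (hN₂ : N₂.PosSemidef) (hNsum : N₁ + N₂ = 1)
    (ρ : Matrix (Fin d × Fin D) (Fin d × Fin D) ℂ)
    (hρ : ρ.PosSemidef) (hρtr : ρ.trace = 1) :
    traceNorm (partialTraceS (M₁ - N₁) ρ) + traceNorm (partialTraceS (M₂ - N₂) ρ) ≤
      2 * ⨆ k, |(hM₁.1.sub hN₁.1).eigenvalues k| :=
  traceNorm_partialTrace_add_le_general M₁ M₂ N₁ N₂ hM₁ hMsum hN₁ hNsum ρ hρ hρtr
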